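/- Let g ≥ 1 and let C be a nonempty subset of ZMod g of cardinality d. Define the map succ : C → C by succ(c) = c + n_c, where n_c is the least positive integer k with c + k ∈ C. Then succ is a bijection of C whose d-th iterate is the identity, and for every c ∈ C the orbit {c, succ(c), succ²(c), …} is all of C (i.e. succ is a single d-cycle). -/
import Mathlib


/-- The map `succ c = c + n_c` (with `n_c` the least positive step back into `C`)
is a bijection of `C` whose `|C|`-th iterate is the identity, and it acts
transitively on `C` (a single `|C|`-cycle). -/
theorem succ_map_single_cycle (g : ℕ) (hg : 1 ≤ g) (C : Finset (ZMod g)) (hC : C.Nonempty)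
    (n : ZMod g → ℕ)
    (hn : ∀ c ∈ C, 0 < n c ∧ (c + (n c : ZMod g)) ∈ C ∧
      ∀ k : ℕ, 0 < k → (c + (k : ZMod g)) ∈ C → n c ≤ k) :
    Set.BijOn (fun c => c + (n c : ZMod g)) (C : Set (ZMod g)) (C : Set (ZMod g)) ∧
    (∀ c ∈ C, (fun c => c + (n c : ZMod g))^[C.card] c = c) ∧
    (∀ c ∈ C, ∀ c' ∈ C, ∃ m : ℕ, (fun c => c + (n c : ZMod g))^[m] c = c') := by
  haveI : NeZero g := ⟨by omega⟩
  set f : ZMod g → ZMod g := fun c => c + (n c : ZMod g) with hfdef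
  have hmaps : ∀ c ∈ C, f c ∈ C := fun c hc => (hn c hc).2.1
  -- injectivity
  have hinj : Set.InjOn f (C : Set (ZMod g)) := by
    have key : ∀ a ∈ C, ∀ b ∈ C, n b ≤ n a → f a = f b → a = b := by
      intro a ha b hb hle hfe
      rcases eq_or_lt_of_le hle with heq | hlt
      · have h1 : (n a : ZMod g) = (n b : ZMod g) := by rw [heq]
        have h2 : a + (n a : ZMod g) = b + (n b : ZMod g) := hfe
        rw [h1] at h2
        exact add_right_cancel h2
      · exfalso
        have h1 : (n b : ZMod g) + ((n a - n b : ℕ) : ZMod g) = (n a : ZMod g) := by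
          rw [← Nat.cast_add]; congr 1; omega
        have h2 : a + (n a : ZMod g) = b + (n b : ZMod g) := hfe
        have hb' : a + ((n a - n b : ℕ) : ZMod g) = b := by
          linear_combination h2 + h1
        have h3 := (hn a ha).2.2 (n a - n b) (by omega) (by rw [hb']; exact hb)
        have h4 := (hn b hb).1
        omega
    intro a ha b hb hfe
    rcases le_total (n b) (n a) with h | h
    · exact key a ha b hb h hfe
    · exact (key b hb a ha h hfe.symm).symm
  -- iterates stay in C
  have hiterC : ∀ c ∈ C, ∀ i : ℕ, f^[i] c ∈ C := by
    intro c hc i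
    induction i with
    | zero => simpa using hc
    | succ i ih => rw [Function.iterate_succ_apply']; exact hmaps _ ih
  -- cancellation
  have hcancel : ∀ i : ℕ, ∀ a ∈ C, ∀ b ∈ C, f^[i] a = f^[i] b → a = b := by
    intro i
    induction i with
    | zero => intro a _ b _ h; simpa using h
    | succ i ih =>
      intro a ha b hb h
      rw [Function.iterate_succ_apply', Function.iterate_succ_apply'] at h
      exact ih a ha b hb (hinj (hiterC a ha i) (hiterC b hb i) h)
  -- reachability by positive steps
  have hreach : ∀ m : ℕ, ∀ c ∈ C, 0 < m → c + (m : ZMod g) ∈ C →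
      ∃ i : ℕ, f^[i] c = c + (m : ZMod g) := by
    intro m
    induction m using Nat.strong_induction_on with
    | _ m IH =>
      intro c hc hm hcm
      obtain ⟨hpos, hfc, hmin⟩ := hn c hc
      have hle : n c ≤ m := hmin m hm hcm
      rcases eq_or_lt_of_le hle with heq | hlt
      · exact ⟨1, by simp [f, heq]⟩
      · have hx : (f c) + ((m - n c : ℕ) : ZMod g) = c + (m : ZMod g) := by
          simp only [f]
          rw [add_assoc, ← Nat.cast_add]
          congr 2
          omega
        obtain ⟨i, hi⟩ := IH (m - n c) (by omega) (f c) hfc (by omega)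
          (by rw [hx]; exact hcm)
        refine ⟨i + 1, ?_⟩
        rw [Function.iterate_add_apply, Function.iterate_one, hi, hx]
  -- full reachability
  have hreach' : ∀ c ∈ C, ∀ c' ∈ C, ∃ m : ℕ, f^[m] c = c' := by
    intro c hc c' hc'
    by_cases hcc : c' = c
    · exact ⟨0, by simp [hcc]⟩
    · have hne : c' - c ≠ 0 := sub_ne_zero.mpr hcc
      have hmpos : 0 < (c' - c).val := by
        rcases Nat.eq_zero_or_pos (c' - c).val with h | h
        · exact absurd ((ZMod.val_eq_zero _).mp h) hne
        · exact h
      have heq : c + (((c' - c).val : ℕ) : ZMod g) = c' := by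
        rw [ZMod.natCast_val, ZMod.cast_id]; ring
      obtain ⟨i, hi⟩ := hreach (c' - c).val c hc hmpos (by rw [heq]; exact hc')
      exact ⟨i, by rw [hi, heq]⟩
  -- existence of a small positive period
  have hperiod : ∀ c ∈ C, ∃ p : ℕ, 0 < p ∧ p ≤ C.card ∧ f^[p] c = c := by
    intro c hc
    have hcard : C.card < (Finset.range (C.card + 1)).card := by
      simp
    obtain ⟨i, hi, j, hj, hij, hfij⟩ :=
      Finset.exists_ne_map_eq_of_card_lt_of_maps_to hcard
        (fun i _ => hiterC c hc i)
    simp only [Finset.mem_range] at hi hj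
    have key : ∀ i j : ℕ, i < j → j ≤ C.card → f^[i] c = f^[j] c →
        ∃ p : ℕ, 0 < p ∧ p ≤ C.card ∧ f^[p] c = c := by
      intro i j hlt hjle h
      refine ⟨j - i, by omega, by omega, ?_⟩
      have : f^[i + (j - i)] c = f^[i] (f^[j - i] c) := Function.iterate_add_apply f i (j - i) c
      rw [show i + (j - i) = j by omega] at this
      rw [← h] at this
      exact (hcancel i c hc (f^[j - i] c) (hiterC c hc _) this).symm
    rcases hij.lt_or_gt with h | h
    · exact key i j h (by omega) hfij
    · exact key j i h (by omega) hfij.symm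
  -- the period is exactly the cardinality
  have hpow : ∀ c ∈ C, f^[C.card] c = c := by
    intro c hc
    obtain ⟨p, hp0, hple, hp⟩ := hperiod c hc
    have hmul : ∀ q : ℕ, f^[p * q] c = c := by
      intro q
      induction q with
      | zero => simp
      | succ q ih =>
        rw [Nat.mul_succ, Function.iterate_add_apply, hp, ih]
    have hmod : ∀ m : ℕ, f^[m] c = f^[m % p] c := by
      intro m
      conv_lhs => rw [← Nat.mod_add_div m p]
      rw [Function.iterate_add_apply, hmul]
    have hsub : C ⊆ (Finset.range p).image (fun i => f^[i] c) := by
      intro c' hc'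
      obtain ⟨m, hm⟩ := hreach' c hc c' hc'
      refine Finset.mem_image.mpr ⟨m % p, Finset.mem_range.mpr (Nat.mod_lt _ hp0), ?_⟩
      rw [← hmod, hm]
    have hle2 : C.card ≤ p := le_trans (Finset.card_le_card hsub)
      (le_trans Finset.card_image_le (by simp))
    have : p = C.card := le_antisymm hple hle2
    rw [← this]; exact hp
  refine ⟨⟨fun x hx => hmaps x hx, hinj, ?_⟩, hpow, hreach'⟩
  -- surjectivity
  intro x hx
  have hx' : x ∈ C := hx
  have hcard1 : 1 ≤ C.card := Finset.card_pos.mpr hC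
  refine ⟨f^[C.card - 1] x, hiterC x hx' _, ?_⟩
  have h : f^[C.card - 1 + 1] x = f (f^[C.card - 1] x) :=
    Function.iterate_succ_apply' f _ x
  rw [show C.card - 1 + 1 = C.card by omega] at h
  show f (f^[C.card - 1] x) = x
  rw [← h, hpow x hx']
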